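/- Let |ψ_i⟩ (1 ≤ i ≤ I) and |φ⟩ be unit vectors in a finite-dimensional complex Hilbert space, and 0 ≤ λ_i ≤ 1 with ‖Σ_i λ_i |ψ_i⟩⟨ψ_i| - |φ⟩⟨φ|‖_1 ≤ ε, where ε < 1/2. Then there exists i₀ such that √(1 - |⟨φ|ψ_{i₀}⟩|²) ≤ √(2ε). -/

import Mathlib

/-!
Pairing `M = Σᵢ λᵢ|ψᵢ⟩⟨ψᵢ| - |φ⟩⟨φ|` with the identity and with `|φ⟩⟨φ|`, both of operator norm
at most one, and using `|tr (X M)| ≤ ‖X‖_∞ ‖M‖₁` gives `Σᵢ λᵢ ≤ 1 + ε` and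
`Σᵢ λᵢ |⟨φ|ψᵢ⟩|² ≥ 1 - ε`. The largest overlap `x` therefore satisfies `(1 + ε) x ≥ 1 - ε`,
whence `x ≥ 1 - 2ε`.
-/

/-- The rank-one projection `|φ⟩⟨φ|` as a matrix: entries `φ i * conj (φ j)`. -/
noncomputable def proj {d : ℕ} (φ : EuclideanSpace ℂ (Fin d)) : Matrix (Fin d) (Fin d) ℂ :=
  Matrix.vecMulVec (fun i => φ i) (fun j => star (φ j))

/-- The trace norm (sum of singular values, i.e. square roots of the eigenvalues of `AᴴA`). -/
noncomputable def traceNorm {d : ℕ} (A : Matrix (Fin d) (Fin d) ℂ) : ℝ :=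
  ∑ i, Real.sqrt ((Matrix.isHermitian_conjTranspose_mul_self A).eigenvalues i)

/-- The operator (`∞`-)norm of a matrix acting on `ℓ²`. -/
noncomputable def opNorm {d : ℕ} (A : Matrix (Fin d) (Fin d) ℂ) : ℝ :=
  ‖Matrix.toEuclideanCLM (𝕜 := ℂ) A‖

open Matrix InnerProductSpace

lemma Matrix.trace_eq_trace_toEuclideanCLM {𝕜 n : Type*} [RCLike 𝕜] [Fintype n] [DecidableEq n]
    (C : Matrix n n 𝕜) :
    C.trace = LinearMap.trace 𝕜 _ (toEuclideanCLM (𝕜 := 𝕜) C : EuclideanSpace 𝕜 n →ₗ[𝕜] _) := by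
  rw [coe_toEuclideanCLM_eq_toEuclideanLin, toEuclideanLin_eq_toLin_orthonormal, trace_toLin_eq]

lemma Matrix.trace_eq_sum_inner_toEuclideanCLM {𝕜 ι n : Type*} [RCLike 𝕜] [Fintype ι]
    [Fintype n] [DecidableEq n] (C : Matrix n n 𝕜) (b : OrthonormalBasis ι 𝕜 (EuclideanSpace 𝕜 n)) :
    C.trace = ∑ i, inner 𝕜 (b i) (toEuclideanCLM (𝕜 := 𝕜) C (b i)) := by
  rw [trace_eq_trace_toEuclideanCLM, LinearMap.trace_eq_sum_inner _ b]
  rfl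

lemma Matrix.norm_toEuclideanCLM_eigenvectorBasis_sq {𝕜 n : Type*} [RCLike 𝕜] [Fintype n]
    [DecidableEq n] (M : Matrix n n 𝕜) (i : n) :
    ‖toEuclideanCLM (𝕜 := 𝕜) M ((isHermitian_conjTranspose_mul_self M).eigenvectorBasis i)‖ ^ 2 =
      (isHermitian_conjTranspose_mul_self M).eigenvalues i := by
  set hH := isHermitian_conjTranspose_mul_self M
  set v := hH.eigenvectorBasis i
  have hv : ‖v‖ = 1 := hH.eigenvectorBasis.orthonormal.1 i
  have hMM : ContinuousLinearMap.adjoint (toEuclideanCLM (𝕜 := 𝕜) M) (toEuclideanCLM (𝕜 := 𝕜) M v)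
      = (hH.eigenvalues i : 𝕜) • v := by
    rw [← ContinuousLinearMap.star_eq_adjoint, ← map_star, star_eq_conjTranspose,
      ← ContinuousLinearMap.comp_apply, ← ContinuousLinearMap.mul_def, ← map_mul,
      ← RCLike.real_smul_eq_coe_smul]
    exact congr(WithLp.toLp 2 $(hH.mulVec_eigenvectorBasis i))
  rw [← RCLike.ofReal_inj (K := 𝕜), RCLike.ofReal_pow, ← inner_self_eq_norm_sq_to_K,
    ← ContinuousLinearMap.adjoint_inner_right, hMM, inner_smul_right, inner_self_eq_norm_sq_to_K,
    hv, RCLike.ofReal_one, one_pow, mul_one]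

lemma norm_trace_mul_le_opNorm_mul_traceNorm {d : ℕ} (X M : Matrix (Fin d) (Fin d) ℂ) :
    ‖(X * M).trace‖ ≤ opNorm X * traceNorm M := by
  set hH := isHermitian_conjTranspose_mul_self M
  set b := hH.eigenvectorBasis
  have hb : ∀ i, ‖b i‖ = 1 := b.orthonormal.1
  calc ‖(X * M).trace‖
      = ‖∑ i, inner ℂ (b i) (toEuclideanCLM (𝕜 := ℂ) X (toEuclideanCLM (𝕜 := ℂ) M (b i)))‖ := by
        rw [trace_eq_sum_inner_toEuclideanCLM _ b, map_mul]
        rfl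
    _ ≤ ∑ i, opNorm X * ‖toEuclideanCLM (𝕜 := ℂ) M (b i)‖ := by
        refine norm_sum_le_of_le _ fun i _ => (norm_inner_le_norm _ _).trans ?_
        rw [hb, one_mul]
        exact ContinuousLinearMap.le_opNorm _ _
    _ = opNorm X * traceNorm M := by
        rw [traceNorm, Finset.mul_sum]
        congr! 2 with i
        rw [← norm_toEuclideanCLM_eigenvectorBasis_sq, Real.sqrt_sq (norm_nonneg _)]

lemma norm_trace_le_traceNorm {d : ℕ} (M : Matrix (Fin d) (Fin d) ℂ) :
    ‖M.trace‖ ≤ traceNorm M := by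
  have hX : opNorm (1 : Matrix (Fin d) (Fin d) ℂ) ≤ 1 := by
    rw [opNorm, map_one]
    exact ContinuousLinearMap.norm_id_le
  have hM : 0 ≤ traceNorm M := Finset.sum_nonneg fun i _ => Real.sqrt_nonneg _
  simpa using (norm_trace_mul_le_opNorm_mul_traceNorm 1 M).trans (mul_le_of_le_one_left hM hX)

lemma toEuclideanCLM_proj {d : ℕ} (φ : EuclideanSpace ℂ (Fin d)) :
    toEuclideanCLM (𝕜 := ℂ) (proj φ) = rankOne ℂ φ φ := by
  apply ContinuousLinearMap.coe_injective
  rw [coe_toEuclideanCLM_eq_toEuclideanLin, ← LinearEquiv.eq_symm_apply,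
    symm_toEuclideanLin_rankOne]
  rfl

lemma opNorm_proj {d : ℕ} (φ : EuclideanSpace ℂ (Fin d)) : opNorm (proj φ) = ‖φ‖ ^ 2 := by
  rw [opNorm, toEuclideanCLM_proj, norm_rankOne, sq]

lemma trace_proj_mul_proj {d : ℕ} (a b : EuclideanSpace ℂ (Fin d)) :
    (proj a * proj b).trace = (‖(inner ℂ a b : ℂ)‖ : ℂ) ^ 2 := by
  rw [trace_eq_trace_toEuclideanCLM, map_mul, toEuclideanCLM_proj, toEuclideanCLM_proj,
    ContinuousLinearMap.mul_def, rankOne_comp_rankOne, ContinuousLinearMap.toLinearMap_smul,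
    map_smul, trace_rankOne, smul_eq_mul, ← inner_conj_symm b a, Complex.mul_conj']

lemma trace_proj {d : ℕ} (v : EuclideanSpace ℂ (Fin d)) : (proj v).trace = (‖v‖ : ℂ) ^ 2 := by
  rw [trace_eq_trace_toEuclideanCLM, toEuclideanCLM_proj, trace_rankOne,
    inner_self_eq_norm_sq_to_K]
  rfl

lemma exists_one_sub_two_mul_le_of_le_sum_mul {ι : Type*} [Fintype ι] {w x : ι → ℝ} {ε : ℝ}
    (hw : ∀ i, 0 ≤ w i) (hx : ∀ i, 0 ≤ x i) (hε : ε < 1) (hw_sum : ∑ i, w i ≤ 1 + ε)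
    (hwx_sum : 1 - ε ≤ ∑ i, w i * x i) : ∃ i, 1 - 2 * ε ≤ x i := by
  have : Nonempty ι := by
    by_contra h
    rw [not_nonempty_iff] at h
    simp only [Finset.univ_eq_empty, Finset.sum_empty] at hwx_sum
    linarith
  obtain ⟨i₀, -, hmax⟩ := Finset.exists_max_image Finset.univ x Finset.univ_nonempty
  have hle : ∑ i, w i * x i ≤ (∑ i, w i) * x i₀ := by
    rw [Finset.sum_mul]
    exact Finset.sum_le_sum fun i hi => mul_le_mul_of_nonneg_left (hmax i hi) (hw i)
  have hmass : 1 - ε ≤ (1 + ε) * x i₀ :=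
    hwx_sum.trans (hle.trans (mul_le_mul_of_nonneg_right hw_sum (hx i₀)))
  have hpos : 0 < 1 + ε := by nlinarith [hx i₀]
  refine ⟨i₀, le_of_not_gt fun hlt => ?_⟩
  nlinarith [mul_lt_mul_of_pos_right hlt hpos, sq_nonneg ε]

theorem stmt8_general {d I : ℕ} (ψ : Fin I → EuclideanSpace ℂ (Fin d)) (hψ : ∀ i, ‖ψ i‖ = 1)
    (φ : EuclideanSpace ℂ (Fin d)) (hφ : ‖φ‖ = 1) (lam : Fin I → ℝ)
    (h0 : ∀ i, 0 ≤ lam i) {ε : ℝ} (hε : ε < 1 / 2)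
    (h : traceNorm (∑ i, (lam i : ℂ) • proj (ψ i) - proj φ) ≤ ε) :
    ∃ i₀, Real.sqrt (1 - ‖(inner ℂ φ (ψ i₀) : ℂ)‖ ^ 2) ≤ Real.sqrt (2 * ε) := by
  set M := ∑ i, (lam i : ℂ) • proj (ψ i) - proj φ
  set x : Fin I → ℝ := fun i => ‖(inner ℂ φ (ψ i) : ℂ)‖ ^ 2
  have htrace : M.trace = ((∑ i, lam i - 1 : ℝ) : ℂ) := by
    simp [M, trace_sub, trace_sum, trace_smul, trace_proj, hψ, hφ]
  have htrace_proj : (proj φ * M).trace = ((∑ i, lam i * x i - 1 : ℝ) : ℂ) := by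
    simp [M, x, mul_sub, Finset.mul_sum, trace_sub, trace_sum, trace_smul, trace_proj_mul_proj,
      inner_self_eq_norm_sq_to_K, hφ]
  have hsum : ∑ i, lam i ≤ 1 + ε := by
    have := (norm_trace_le_traceNorm M).trans h
    rw [htrace, Complex.norm_real, Real.norm_eq_abs] at this
    linarith [(abs_le.mp this).2]
  have hmass : 1 - ε ≤ ∑ i, lam i * x i := by
    have := (norm_trace_mul_le_opNorm_mul_traceNorm (proj φ) M).trans_eq
      (by rw [opNorm_proj, hφ, one_pow, one_mul])
    rw [htrace_proj, Complex.norm_real, Real.norm_eq_abs] at this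
    linarith [(abs_le.mp (this.trans h)).1]
  obtain ⟨i₀, hi₀⟩ := exists_one_sub_two_mul_le_of_le_sum_mul h0 (fun i => sq_nonneg _)
    (by linarith) hsum hmass
  exact ⟨i₀, Real.sqrt_le_sqrt (by linarith)⟩

/-- Lemma 2 of the paper: if `0 ≤ λᵢ ≤ 1` and
`‖Σᵢ λᵢ|ψᵢ⟩⟨ψᵢ| - |φ⟩⟨φ|‖₁ ≤ ε < 1/2`, then some `i₀` satisfies
`√(1 - |⟨φ|ψ_{i₀}⟩|²) ≤ √(2ε)`. -/
theorem stmt8 {d I : ℕ} (ψ : Fin I → EuclideanSpace ℂ (Fin d)) (hψ : ∀ i, ‖ψ i‖ = 1)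
    (φ : EuclideanSpace ℂ (Fin d)) (hφ : ‖φ‖ = 1) (lam : Fin I → ℝ)
    (h0 : ∀ i, 0 ≤ lam i) (h1 : ∀ i, lam i ≤ 1) {ε : ℝ} (hε : ε < 1 / 2)
    (h : traceNorm (∑ i, (lam i : ℂ) • proj (ψ i) - proj φ) ≤ ε) :
    ∃ i₀, Real.sqrt (1 - ‖(inner ℂ φ (ψ i₀) : ℂ)‖ ^ 2) ≤ Real.sqrt (2 * ε) :=
  stmt8_general ψ hψ φ hφ lam h0 hε h
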